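/- Let Y be a finite type with pmf q of full support, p a pmf on Y, and g : Y → ℝ with E_{y∼p}[g(y)] = 0 (score identity). For i.i.d. samples y₁,...,y_N from q, define the in-sample mean baseline estimator using advantages A_i = r(y_i) − (1/N)∑_j r(y_j) and weights w_i = p(y_i)/q(y_i). Then E[(1/N)∑_i w_i A_i g(y_i)] = (1 − 1/N) · E_{y∼p}[r(y) g(y)]. -/

import Mathlib

open MeasureTheory ProbabilityTheory

/-!
With the weighted score `u = (p / q) g`, importance weighting gives `E_q[u] = E_p[g] = 0` and
`E_q[u r] = E_p[r g]`. For any `u, v`, the summand `E[u (y_i) (v (y_i) - v̄)]` equals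
`(1 - 1/N) Cov_q(u, v)`: the sample mean `v̄` contains `v (y_i)` itself with weight `1/N`, while
the other `N - 1` samples are independent of `y_i` and each contribute `E_q[u] E_q[v]`.
-/

section FiniteValued

variable {Ω Y : Type*} [MeasurableSpace Ω] [MeasurableSpace Y] [Fintype Y]
  [MeasurableSingletonClass Y] {P : Measure Ω} [IsFiniteMeasure P]

theorem integrable_comp_of_finite {X : Ω → Y} (hX : Measurable X) (f : Y → ℝ) :
    Integrable (fun ω => f (X ω)) P :=
  (Integrable.of_finite (f := f)).comp_measurable hX

theorem integral_comp_eq_sum_of_law {X : Ω → Y} (hX : Measurable X) {q : Y → ℝ}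
    (hlaw : ∀ a, (P {ω | X ω = a}).toReal = q a) (f : Y → ℝ) :
    ∫ ω, f (X ω) ∂P = ∑ a, q a * f a := by
  rw [← integral_map hX.aemeasurable (measurable_of_finite f).aestronglyMeasurable,
    integral_fintype .of_finite]
  refine Finset.sum_congr rfl fun a _ => ?_
  rw [Measure.real, Measure.map_apply hX (measurableSet_singleton a), smul_eq_mul]
  exact congrArg (· * f a) (hlaw a)

variable {N : ℕ} {y : Fin N → Ω → Y} {q : Y → ℝ}

theorem integral_mul_comp_of_iid (hmeas : ∀ i, Measurable (y i)) (hindep : iIndepFun y P)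
    (hlaw : ∀ i a, (P {ω | y i ω = a}).toReal = q a) (u v : Y → ℝ) (i j : Fin N) :
    ∫ ω, u (y i ω) * v (y j ω) ∂P
      = (∑ a, q a * u a) * (∑ a, q a * v a)
        + if i = j then
            ∑ a, q a * (u a * v a) - (∑ a, q a * u a) * (∑ a, q a * v a) else 0 := by
  by_cases hij : i = j
  · subst hij
    simp only [if_true, add_sub_cancel]
    exact integral_comp_eq_sum_of_law (hmeas i) (hlaw i) (fun a => u a * v a)
  · rw [if_neg hij, add_zero, ← integral_comp_eq_sum_of_law (hmeas i) (hlaw i),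
      ← integral_comp_eq_sum_of_law (hmeas j) (hlaw j)]
    exact (hindep.indepFun hij).integral_comp_mul_comp (hmeas i).aemeasurable
      (hmeas j).aemeasurable (measurable_of_finite u).aestronglyMeasurable
      (measurable_of_finite v).aestronglyMeasurable

theorem integral_mul_sub_sampleMean_of_iid (hmeas : ∀ i, Measurable (y i))
    (hindep : iIndepFun y P) (hlaw : ∀ i a, (P {ω | y i ω = a}).toReal = q a)
    (u v : Y → ℝ) (i : Fin N) :
    ∫ ω, u (y i ω) * (v (y i ω) - (1 / (N : ℝ)) * ∑ j, v (y j ω)) ∂P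
      = (1 - 1 / (N : ℝ)) *
          (∑ a, q a * (u a * v a) - (∑ a, q a * u a) * (∑ a, q a * v a)) := by
  have hN : (N : ℝ) ≠ 0 := Nat.cast_ne_zero.mpr (Fin.pos i).ne'
  have hX : Measurable fun ω j => y j ω := measurable_pi_lambda _ hmeas
  have hint : ∀ j, Integrable (fun ω => u (y i ω) * v (y j ω)) P := fun j =>
    integrable_comp_of_finite hX (fun z => u (z i) * v (z j))
  have hexpand : (fun ω => u (y i ω) * (v (y i ω) - (1 / (N : ℝ)) * ∑ j, v (y j ω)))
      = fun ω => u (y i ω) * v (y i ω) - (1 / (N : ℝ)) * ∑ j, u (y i ω) * v (y j ω) := by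
    funext ω
    rw [← Finset.mul_sum, mul_sub, mul_left_comm (u _)]
  rw [hexpand, integral_sub (hint i) ((integrable_finsetSum _ fun j _ => hint j).const_mul _),
    integral_const_mul, integral_finsetSum _ fun j _ => hint j]
  simp only [integral_mul_comp_of_iid hmeas hindep hlaw, Finset.sum_add_distrib,
    Finset.sum_const, Finset.card_univ, Fintype.card_fin, nsmul_eq_mul, Finset.sum_ite_eq,
    Finset.mem_univ, if_true]
  field_simp
  ring

end FiniteValued

theorem sum_mul_div_mul_eq {Y : Type*} [Fintype Y] {q : Y → ℝ} (hq : ∀ a, q a ≠ 0)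
    (p f : Y → ℝ) : ∑ a, q a * (p a / q a * f a) = ∑ a, p a * f a :=
  Finset.sum_congr rfl fun a _ => by rw [← mul_assoc, mul_div_cancel₀ _ (hq a)]

theorem in_sample_mean_baseline_shrinkage_general
    {Y : Type*} [Fintype Y] [MeasurableSpace Y] [MeasurableSingletonClass Y]
    {Ω : Type*} [MeasurableSpace Ω] (P : Measure Ω) [IsProbabilityMeasure P]
    (q : Y → ℝ) (hq0 : ∀ a, 0 < q a)
    (p : Y → ℝ)
    (r g : Y → ℝ) (hscore : ∑ a, p a * g a = 0)
    (N : ℕ) (hN : 1 ≤ N) (y : Fin N → Ω → Y)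
    (hmeas : ∀ i, Measurable (y i))
    (hindep : iIndepFun y P)
    (hlaw : ∀ i a, (P {ω | y i ω = a}).toReal = q a) :
    ∫ ω, (1 / (N : ℝ)) * ∑ i, (p (y i ω) / q (y i ω)) *
        (r (y i ω) - (1 / (N : ℝ)) * ∑ j, r (y j ω)) * g (y i ω) ∂P
      = (1 - 1 / (N : ℝ)) * ∑ a, p a * (r a * g a) := by
  have hq : ∀ a, q a ≠ 0 := fun a => (hq0 a).ne'
  have hX : Measurable fun ω j => y j ω := measurable_pi_lambda _ hmeas
  set w : Y → ℝ := fun a => p a / q a * g a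
  have hterm : ∀ i ω, p (y i ω) / q (y i ω) * (r (y i ω) - (1 / (N : ℝ)) * ∑ j, r (y j ω))
      * g (y i ω) = w (y i ω) * (r (y i ω) - (1 / (N : ℝ)) * ∑ j, r (y j ω)) :=
    fun i ω => by ring
  have hcov : ∑ a, q a * (w a * r a) - (∑ a, q a * w a) * (∑ a, q a * r a)
      = ∑ a, p a * (r a * g a) := by
    simp only [w, mul_right_comm _ (g _), mul_assoc, sum_mul_div_mul_eq hq, hscore, zero_mul,
      sub_zero]
  simp_rw [hterm]
  rw [integral_const_mul, integral_finsetSum _ fun i _ =>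
    integrable_comp_of_finite hX (fun z => w (z i) * (r (z i) - (1 / (N : ℝ)) * ∑ j, r (z j)))]
  simp only [integral_mul_sub_sampleMean_of_iid hmeas hindep hlaw, hcov, Finset.sum_const,
    Finset.card_univ, Fintype.card_fin, nsmul_eq_mul]
  have : (N : ℝ) ≠ 0 := Nat.cast_ne_zero.mpr (by omega)
  field_simp

/-- In-sample second-turn group-mean baseline yields `(1 - 1/N)` shrinkage: for i.i.d.
samples `y₁,...,y_N` from `q`, importance weights `w_i = p (y i) / q (y i)`, advantages
`A_i = r (y i) - (1/N) ∑ j, r (y j)`, and a score function `g` with `∑ y, p y * g y = 0`,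
the expectation of `(1/N) ∑ i, w_i * A_i * g (y i)` equals
`(1 - 1/N) * ∑ y, p y * (r y * g y)`. -/
theorem in_sample_mean_baseline_shrinkage
    {Y : Type*} [Fintype Y] [MeasurableSpace Y] [MeasurableSingletonClass Y]
    {Ω : Type*} [MeasurableSpace Ω] (P : Measure Ω) [IsProbabilityMeasure P]
    (q : Y → ℝ) (hq0 : ∀ a, 0 < q a) (hq1 : ∑ a, q a = 1)
    (p : Y → ℝ) (hp0 : ∀ a, 0 ≤ p a) (hp1 : ∑ a, p a = 1)
    (r g : Y → ℝ) (hscore : ∑ a, p a * g a = 0)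
    (N : ℕ) (hN : 1 ≤ N) (y : Fin N → Ω → Y)
    (hmeas : ∀ i, Measurable (y i))
    (hindep : iIndepFun y P)
    (hlaw : ∀ i a, (P {ω | y i ω = a}).toReal = q a) :
    ∫ ω, (1 / (N : ℝ)) * ∑ i, (p (y i ω) / q (y i ω)) *
        (r (y i ω) - (1 / (N : ℝ)) * ∑ j, r (y j ω)) * g (y i ω) ∂P
      = (1 - 1 / (N : ℝ)) * ∑ a, p a * (r a * g a) :=
  in_sample_mean_baseline_shrinkage_general P q hq0 p r g hscore N hN y hmeas hindep hlaw
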